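/- arXiv:1510.08018 — 4 statements merged into one kernel-verified Lean document; each statement's English description precedes it below -/
import Mathlib

section
/- (Geometric mean decomposition) Let A be a real M×N matrix with M ≤ N and rank M. Then there exist an M×M orthogonal matrix U, an N×N orthogonal matrix V, and a real M×N generalized lower-triangular matrix T such that A = U * T * Vᵀ and all diagonal entries of T are equal to the same positive real number d satisfying d^(2M) = det(A * Aᵀ). -/
/-!
Induction on the number of rows. The eigenvalues of `A * Aᵀ` have geometric mean `d ^ 2`, so one
of them is at most `d ^ 2` and another at least `d ^ 2`; a unit vector `u` in the span of their
eigenvectors satisfies `‖Aᵀ u‖ = d`. Orthogonal matrices whose first columns are `u` and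
`v = Aᵀ u / d` transform `A` into a matrix `C` with first row `(d, 0, …, 0)`. Clearing the first
column of `C` by row operations of determinant one shows that its lower-right block `C'` satisfies
`det (C' * C'ᵀ) = d ^ (2 * (M - 1))`, so the induction hypothesis applies to `C'`.
-/

open Matrix

theorem Finset.exists_le_and_exists_le_of_prod_eq_pow {ι R : Type*} [Fintype ι] [Nonempty ι]
    [CommSemiring R] [LinearOrder R] [IsStrictOrderedRing R] {f : ι → R} {t : R}
    (hf : ∀ i, 0 < f i) (ht : 0 < t) (h : ∏ i, f i = t ^ Fintype.card ι) :
    (∃ k, f k ≤ t) ∧ ∃ l, t ≤ f l := by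
  constructor
  · by_contra! hlt
    have := prod_lt_prod_of_nonempty (fun i _ => ht) (fun i _ => hlt i) univ_nonempty
    simp [h] at this
  · by_contra! hlt
    have := prod_lt_prod_of_nonempty (fun i _ => hf i) (fun i _ => hlt i) univ_nonempty
    simp [h] at this

namespace Matrix

section BlockDiagCons

variable {R : Type*} {m n k m' n' : ℕ}

/-- The block-diagonal matrix `diag(a, P)`. -/
def blockDiagCons [Zero R] (a : R) (P : Matrix (Fin m) (Fin n) R) :
    Matrix (Fin (m + 1)) (Fin (n + 1)) R :=
  of (Fin.cons (Fin.cons a 0) fun i => Fin.cons 0 (P i))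

section Zero

variable [Zero R] (a : R) (P : Matrix (Fin m) (Fin n) R)

@[simp] theorem blockDiagCons_zero_zero : blockDiagCons a P 0 0 = a := rfl

@[simp] theorem blockDiagCons_zero_succ (j : Fin n) : blockDiagCons a P 0 j.succ = 0 := rfl

@[simp] theorem blockDiagCons_succ_zero (i : Fin m) : blockDiagCons a P i.succ 0 = 0 := rfl

@[simp] theorem blockDiagCons_succ_succ (i : Fin m) (j : Fin n) :
    blockDiagCons a P i.succ j.succ = P i j := rfl

@[simp] theorem submatrix_succ_blockDiagCons :
    (blockDiagCons a P).submatrix Fin.succ Fin.succ = P := rfl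

theorem transpose_blockDiagCons : (blockDiagCons a P)ᵀ = blockDiagCons a Pᵀ := by
  ext i j
  cases i using Fin.cases <;> cases j using Fin.cases <;> rfl

end Zero

theorem blockDiagCons_one_one [Zero R] [One R] :
    blockDiagCons (1 : R) (1 : Matrix (Fin n) (Fin n) R) = 1 := by
  ext i j
  cases i using Fin.cases <;> cases j using Fin.cases <;>
    simp [one_apply, Fin.succ_ne_zero, (Fin.succ_ne_zero _).symm]

theorem blockDiagCons_mul_blockDiagCons [NonUnitalNonAssocSemiring R] (a b : R)
    (P : Matrix (Fin m) (Fin n) R) (Q : Matrix (Fin n) (Fin k) R) :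
    blockDiagCons a P * blockDiagCons b Q = blockDiagCons (a * b) (P * Q) := by
  ext i j
  cases i using Fin.cases <;> cases j using Fin.cases <;> simp [mul_apply, Fin.sum_univ_succ]

theorem submatrix_succ_blockDiagCons_mul_mul_blockDiagCons [NonUnitalNonAssocSemiring R]
    (a b : R) (P : Matrix (Fin m') (Fin m) R) (X : Matrix (Fin (m + 1)) (Fin (n + 1)) R)
    (Q : Matrix (Fin n) (Fin n') R) :
    (blockDiagCons a P * X * blockDiagCons b Q).submatrix Fin.succ Fin.succ =
      P * X.submatrix Fin.succ Fin.succ * Q := by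
  ext i j
  simp [mul_apply, Fin.sum_univ_succ]

theorem row_zero_blockDiagCons_one_mul_mul_blockDiagCons_one [Semiring R]
    (P : Matrix (Fin m') (Fin m) R) {X : Matrix (Fin (m + 1)) (Fin (n + 1)) R}
    (Q : Matrix (Fin n) (Fin n') R) {d : R} (hX : X 0 = Pi.single 0 d) :
    (blockDiagCons 1 P * X * blockDiagCons 1 Q) 0 = Pi.single 0 d := by
  ext j
  cases j using Fin.cases <;> simp [mul_apply, Fin.sum_univ_succ, hX]

theorem det_blockDiagCons [CommRing R] (a : R) (P : Matrix (Fin n) (Fin n) R) :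
    (blockDiagCons a P).det = a * P.det := by
  simp [det_succ_row_zero, Fin.sum_univ_succ]

theorem blockDiagCons_one_mem_orthogonalGroup [CommRing R] {P : Matrix (Fin n) (Fin n) R}
    (hP : P ∈ orthogonalGroup (Fin n) R) :
    blockDiagCons 1 P ∈ orthogonalGroup (Fin (n + 1)) R := by
  rw [mem_orthogonalGroup_iff] at hP ⊢
  rw [transpose_blockDiagCons, blockDiagCons_mul_blockDiagCons, hP, mul_one, blockDiagCons_one_one]

theorem det_mul_transpose_eq_of_row_zero_eq_single [Field R] {d : R} (hd : d ≠ 0)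
    (C : Matrix (Fin (m + 1)) (Fin (n + 1)) R) (hC : C 0 = Pi.single 0 d) :
    (C * Cᵀ).det =
      d ^ 2 * (C.submatrix Fin.succ Fin.succ * (C.submatrix Fin.succ Fin.succ)ᵀ).det := by
  set C' := C.submatrix Fin.succ Fin.succ
  -- `E` adds `C i 0 / d` times row `0` to row `i`, for every `i ≠ 0`.
  set w : Fin (m + 1) → R := Fin.cons 0 fun i => C i.succ 0 / d
  set E : Matrix (Fin (m + 1)) (Fin (m + 1)) R :=
    1 + replicateCol (Fin 1) w * replicateRow (Fin 1) (Pi.single 0 1 : Fin (m + 1) → R)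
  have hE : E.det = 1 := by
    unfold E
    refine (det_one_add_replicateCol_mul_replicateRow w _).trans ?_
    simp [w]
  have hCE : C = E * blockDiagCons d C' := by
    ext i j
    cases i using Fin.cases <;> cases j using Fin.cases <;>
      simp [E, w, C', mul_apply, Fin.sum_univ_succ, hC, hd, one_apply]
  rw [hCE, transpose_mul, ← Matrix.mul_assoc, Matrix.mul_assoc E, det_mul, det_mul, det_transpose,
    hE, transpose_blockDiagCons, blockDiagCons_mul_blockDiagCons, det_blockDiagCons]
  ring

end BlockDiagCons

section Orthogonal

variable {ι κ R : Type*} [Fintype ι] [Fintype κ] [DecidableEq ι] [DecidableEq κ]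

theorem det_transpose_mul_mul_self_of_mem_orthogonalGroup [CommRing R] {U : Matrix ι ι R}
    (hU : U ∈ orthogonalGroup ι R) (X : Matrix ι ι R) : (Uᵀ * X * U).det = X.det := by
  rw [det_mul, det_mul, mul_comm, ← mul_assoc, ← det_mul, (mem_orthogonalGroup_iff _ _).mp hU,
    det_one, one_mul]

theorem transpose_mul_mul_eq_iff_eq_mul_mul_transpose [CommRing R] {U : Matrix ι ι R}
    {W : Matrix κ κ R} (hU : U ∈ orthogonalGroup ι R) (hW : W ∈ orthogonalGroup κ R)
    {X Y : Matrix ι κ R} : Uᵀ * X * W = Y ↔ X = U * Y * Wᵀ := by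
  rw [mem_orthogonalGroup_iff] at hU hW
  constructor <;> rintro rfl
  · simp only [← Matrix.mul_assoc, hU, Matrix.one_mul]
    simp only [Matrix.mul_assoc, hW, Matrix.mul_one]
  · simp only [← Matrix.mul_assoc, mul_eq_one_comm.mp hU, Matrix.one_mul]
    simp only [Matrix.mul_assoc, mul_eq_one_comm.mp hW, Matrix.mul_one]

theorem row_transpose_mul_mul_eq_single [CommRing R] (U : Matrix ι ι R) (A : Matrix ι κ R)
    {W : Matrix κ κ R} (hW : W ∈ orthogonalGroup κ R) {i₀ : ι} {j₀ : κ} {d : R}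
    (h : Aᵀ *ᵥ U.col i₀ = d • W.col j₀) :
    (Uᵀ * A * W) i₀ = Pi.single j₀ d := by
  calc (Uᵀ * A * W) i₀ = (Uᵀ * A * W)ᵀ *ᵥ Pi.single i₀ 1 := by rw [mulVec_single_one]; rfl
    _ = Wᵀ *ᵥ (d • W.col j₀) := by
        rw [transpose_mul, transpose_mul, transpose_transpose, ← mulVec_mulVec, ← mulVec_mulVec,
          mulVec_single_one, h]
    _ = d • Pi.single j₀ 1 := by
        rw [mulVec_smul, ← mulVec_single_one, mulVec_mulVec, (mem_orthogonalGroup_iff' _ _).mp hW,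
          one_mulVec]
    _ = Pi.single j₀ d := by rw [← Pi.single_smul, smul_eq_mul, mul_one]

theorem exists_mem_orthogonalGroup_col_eq (i₀ : ι) (u : ι → ℝ) (hu : u ⬝ᵥ u = 1) :
    ∃ P ∈ orthogonalGroup ι ℝ, P.col i₀ = u := by
  have hunit : Orthonormal ℝ (({i₀} : Set ι).domRestrict fun _ => WithLp.toLp 2 u) := by
    rw [orthonormal_iff_ite]
    rintro ⟨i, rfl⟩ ⟨j, rfl⟩
    simpa only [Set.domRestrict_apply, EuclideanSpace.inner_toLp_toLp, star_trivial, if_true]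
      using hu
  obtain ⟨b, hb⟩ := hunit.exists_orthonormalBasis_extension_of_card_eq (by simp)
  refine ⟨(EuclideanSpace.basisFun ι ℝ).toBasis.toMatrix b,
    (EuclideanSpace.basisFun ι ℝ).toMatrix_orthonormalBasis_mem_orthogonal b, ?_⟩
  ext i
  simp [Module.Basis.toMatrix_apply, hb i₀ rfl]

end Orthogonal

section Spectral

variable {ι : Type*} [Fintype ι] [DecidableEq ι]

theorem IsHermitian.exists_dotProduct_mulVec_eq {G : Matrix ι ι ℝ} (hG : G.IsHermitian) {t : ℝ}
    {k l : ι} (hk : hG.eigenvalues k ≤ t) (hl : t ≤ hG.eigenvalues l) :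
    ∃ u : ι → ℝ, u ⬝ᵥ u = 1 ∧ u ⬝ᵥ G *ᵥ u = t := by
  set φ : ι → ι → ℝ := fun j => WithLp.ofLp (hG.eigenvectorBasis j)
  set μ := hG.eigenvalues
  have hφ : ∀ i j, φ i ⬝ᵥ φ j = if i = j then 1 else 0 := fun i j => by
    simpa [EuclideanSpace.inner_eq_star_dotProduct, dotProduct_comm] using
      orthonormal_iff_ite.mp hG.eigenvectorBasis.orthonormal i j
  have hGφ : ∀ j, G *ᵥ φ j = μ j • φ j := hG.mulVec_eigenvectorBasis
  rcases hk.eq_or_lt with hkt | hkt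
  · exact ⟨φ k, by simp [hφ], by simp [hGφ, hφ, hkt]⟩
  have hkl : k ≠ l := by rintro rfl; exact absurd hl hkt.not_ge
  -- `u = √s φ k + √(1 - s) φ l` with `s` chosen so that `s μ k + (1 - s) μ l = t`
  set s := (μ l - t) / (μ l - μ k)
  have hs0 : 0 ≤ s := div_nonneg (by linarith) (by linarith)
  have hs1 : s ≤ 1 := (div_le_one (by linarith)).mpr (by linarith)
  have hst : s * μ k + (1 - s) * μ l = t := by
    have : μ l - μ k ≠ 0 := by linarith
    simp only [s]
    field_simp
    ring
  refine ⟨√s • φ k + √(1 - s) • φ l, ?_, ?_⟩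
  · simp [dotProduct_add, add_dotProduct, hφ, hkl, hkl.symm, Real.mul_self_sqrt, hs0, hs1]
  · simp only [mulVec_add, mulVec_smul, hGφ, dotProduct_add, dotProduct_smul, add_dotProduct,
      smul_dotProduct, hφ, if_pos, if_neg hkl, if_neg hkl.symm, smul_eq_mul, mul_one, mul_zero,
      add_zero, zero_add]
    linear_combination μ k * Real.mul_self_sqrt hs0 +
      μ l * Real.mul_self_sqrt (sub_nonneg.mpr hs1) + hst

theorem PosSemidef.exists_dotProduct_mulVec_eq_of_det_eq_pow [Nonempty ι] {G : Matrix ι ι ℝ}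
    (hG : G.PosSemidef) {t : ℝ} (ht : 0 < t) (hdet : G.det = t ^ Fintype.card ι) :
    ∃ u : ι → ℝ, u ⬝ᵥ u = 1 ∧ u ⬝ᵥ G *ᵥ u = t := by
  have hprod : ∏ i, hG.isHermitian.eigenvalues i = t ^ Fintype.card ι := by
    simpa [hG.isHermitian.det_eq_prod_eigenvalues] using hdet
  have hpos : ∀ i, 0 < hG.isHermitian.eigenvalues i := fun i =>
    (hG.eigenvalues_nonneg i).lt_of_ne' fun h0 =>
      (pow_pos ht _).ne' (hprod ▸ Finset.prod_eq_zero (Finset.mem_univ i) h0)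
  obtain ⟨⟨k, hk⟩, l, hl⟩ := Finset.exists_le_and_exists_le_of_prod_eq_pow hpos ht hprod
  exact hG.isHermitian.exists_dotProduct_mulVec_eq hk hl

end Spectral

section Rank

variable {ι : Type*} [Fintype ι] [DecidableEq ι]

theorem isUnit_of_rank_eq_card {K : Type*} [Field K] {G : Matrix ι ι K}
    (h : G.rank = Fintype.card ι) : IsUnit G := by
  refine mulVec_surjective_iff_isUnit.mp ((LinearMap.range_eq_top (f := G.mulVecLin)).mp ?_)
  exact Submodule.eq_top_of_finrank_eq (by rw [Module.finrank_fintype_fun_eq_card]; exact h)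

theorem det_mul_transpose_pos_of_rank_eq {κ : Type*} [Fintype κ] {A : Matrix ι κ ℝ}
    (h : A.rank = Fintype.card ι) : 0 < (A * Aᵀ).det := by
  have hG : (A * Aᵀ).PosSemidef := by simpa using posSemidef_self_mul_conjTranspose A
  refine hG.det_nonneg.lt_of_ne' ?_
  rw [← isUnit_iff_ne_zero, ← isUnit_iff_isUnit_det]
  exact isUnit_of_rank_eq_card (by rw [rank_self_mul_transpose, h])

end Rank

theorem exists_pos_pow_two_mul_eq_det {n : ℕ} {G : Matrix (Fin n) (Fin n) ℝ} (hG : 0 < G.det) :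
    ∃ d : ℝ, 0 < d ∧ d ^ (2 * n) = G.det := by
  rcases n.eq_zero_or_pos with rfl | hn
  · exact ⟨1, one_pos, by simp⟩
  · exact ⟨_, Real.rpow_pos_of_pos hG _, Real.rpow_inv_natCast_pow hG.le (by omega)⟩

theorem exists_mem_orthogonalGroup_row_zero_eq_single {m n : ℕ}
    (A : Matrix (Fin (m + 1)) (Fin (n + 1)) ℝ) {d : ℝ} (hd : 0 < d)
    (hdet : d ^ (2 * (m + 1)) = (A * Aᵀ).det) :
    ∃ U ∈ orthogonalGroup (Fin (m + 1)) ℝ, ∃ W ∈ orthogonalGroup (Fin (n + 1)) ℝ,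
      (Uᵀ * A * W) 0 = Pi.single 0 d ∧
      d ^ (2 * m) = ((Uᵀ * A * W).submatrix Fin.succ Fin.succ *
        ((Uᵀ * A * W).submatrix Fin.succ Fin.succ)ᵀ).det := by
  have hG : (A * Aᵀ).PosSemidef := by simpa using posSemidef_self_mul_conjTranspose A
  obtain ⟨u, hu, huA⟩ := hG.exists_dotProduct_mulVec_eq_of_det_eq_pow (pow_pos hd 2)
    (by rw [← hdet, Fintype.card_fin, ← pow_mul])
  set v := d⁻¹ • (Aᵀ *ᵥ u)
  have hv : v ⬝ᵥ v = 1 := by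
    have : (Aᵀ *ᵥ u) ⬝ᵥ (Aᵀ *ᵥ u) = d ^ 2 := by
      rw [mulVec_transpose, ← dotProduct_mulVec, ← mulVec_transpose, mulVec_mulVec, huA]
    simp only [v, smul_dotProduct, dotProduct_smul, this, smul_eq_mul]
    field_simp
  obtain ⟨U, hU, hUu⟩ := exists_mem_orthogonalGroup_col_eq 0 u hu
  obtain ⟨W, hW, hWv⟩ := exists_mem_orthogonalGroup_col_eq 0 v hv
  have hC0 : (Uᵀ * A * W) 0 = Pi.single 0 d := row_transpose_mul_mul_eq_single U A hW
    (by rw [hUu, hWv, smul_smul, mul_inv_cancel₀ hd.ne', one_smul])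
  refine ⟨U, hU, W, hW, hC0, mul_left_cancel₀ (pow_ne_zero 2 hd.ne') ?_⟩
  have hCC : Uᵀ * A * W * (Uᵀ * A * W)ᵀ = Uᵀ * (A * Aᵀ) * U := by
    simp only [transpose_mul, transpose_transpose, Matrix.mul_assoc]
    rw [← Matrix.mul_assoc W, (mem_orthogonalGroup_iff _ _).mp hW, Matrix.one_mul]
  rw [← det_mul_transpose_eq_of_row_zero_eq_single hd.ne' _ hC0, hCC,
    det_transpose_mul_mul_self_of_mem_orthogonalGroup hU, ← hdet]
  ring

theorem exists_geometric_mean_decomposition_of_pow_eq_det {m n : ℕ} (h : m ≤ n)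
    (A : Matrix (Fin m) (Fin n) ℝ) {d : ℝ} (hd : 0 < d) (hdet : d ^ (2 * m) = (A * Aᵀ).det) :
    ∃ (U : Matrix (Fin m) (Fin m) ℝ) (V : Matrix (Fin n) (Fin n) ℝ) (T : Matrix (Fin m) (Fin n) ℝ),
      U ∈ orthogonalGroup (Fin m) ℝ ∧ V ∈ orthogonalGroup (Fin n) ℝ ∧
      (∀ (i : Fin m) (j : Fin n), (i : ℕ) < j → T i j = 0) ∧
      (∀ i, T i (Fin.castLE h i) = d) ∧ A = U * T * Vᵀ := by
  induction m generalizing n with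
  | zero =>
    exact ⟨1, 1, 0, one_mem _, one_mem _, fun i => i.elim0, fun i => i.elim0, Subsingleton.elim _ _⟩
  | succ m ih =>
    obtain ⟨n, rfl⟩ : ∃ n', n = n' + 1 := ⟨n - 1, by omega⟩
    obtain ⟨U₁, hU₁, W₁, hW₁, hC0, hC'det⟩ := exists_mem_orthogonalGroup_row_zero_eq_single A hd hdet
    set C := U₁ᵀ * A * W₁
    obtain ⟨U', W', T', hU', hW', hT'low, hT'diag, hC'⟩ := ih (Nat.le_of_succ_le_succ h) _ hC'det
    have hBU' := blockDiagCons_one_mem_orthogonalGroup hU'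
    have hBW' := blockDiagCons_one_mem_orthogonalGroup hW'
    set T := blockDiagCons 1 U'ᵀ * C * blockDiagCons 1 W'
    have hT0 : T 0 = Pi.single 0 d := row_zero_blockDiagCons_one_mul_mul_blockDiagCons_one _ _ hC0
    have hT' : T.submatrix Fin.succ Fin.succ = T' := by
      rw [submatrix_succ_blockDiagCons_mul_mul_blockDiagCons]
      exact (transpose_mul_mul_eq_iff_eq_mul_mul_transpose hU' hW').mpr hC'
    rw [← hT'] at hT'low hT'diag
    refine ⟨U₁ * blockDiagCons 1 U', W₁ * blockDiagCons 1 W', T, mul_mem hU₁ hBU',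
      mul_mem hW₁ hBW', ?_, ?_, ?_⟩
    · intro i j hij
      cases i using Fin.cases with
      | zero => rw [hT0, Pi.single_eq_of_ne (Fin.pos_iff_ne_zero.mp hij)]
      | succ i =>
        cases j using Fin.cases with
        | zero => exact absurd hij (Nat.not_lt_zero _)
        | succ j => exact hT'low i j (Nat.succ_lt_succ_iff.mp hij)
    · intro i
      cases i using Fin.cases with
      | zero => simp [hT0]
      | succ i => exact hT'diag i
    · have hA : A = U₁ * C * W₁ᵀ := (transpose_mul_mul_eq_iff_eq_mul_mul_transpose hU₁ hW₁).mp rfl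
      have hC : C = blockDiagCons 1 U' * T * (blockDiagCons 1 W')ᵀ :=
        (transpose_mul_mul_eq_iff_eq_mul_mul_transpose hBU' hBW').mp
          (by rw [transpose_blockDiagCons])
      rw [hA, hC, transpose_mul]
      simp only [Matrix.mul_assoc]

end Matrix

/-- **Geometric mean decomposition.** Any real `M × N` matrix `A`
with `M ≤ N` and rank `M` admits a decomposition `A = U * T * Vᵀ` with `U`, `V`
orthogonal and `T` generalized lower-triangular whose diagonal entries all equal
one positive number `d` satisfying `d ^ (2 * M) = det (A * Aᵀ)`. -/
theorem geometric_mean_decomposition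
    (M N : ℕ) (h : M ≤ N) (A : Matrix (Fin M) (Fin N) ℝ)
    (hrank : A.rank = M) :
    ∃ (U : Matrix (Fin M) (Fin M) ℝ) (V : Matrix (Fin N) (Fin N) ℝ)
      (T : Matrix (Fin M) (Fin N) ℝ) (d : ℝ),
      U * Uᵀ = 1 ∧ V * Vᵀ = 1 ∧
      (∀ (i : Fin M) (j : Fin N), (i : ℕ) < (j : ℕ) → T i j = 0) ∧
      A = U * T * Vᵀ ∧
      0 < d ∧ (∀ i : Fin M, T i (Fin.castLE h i) = d) ∧
      d ^ (2 * M) = (A * Aᵀ).det := by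
  obtain ⟨d, hd, hdet⟩ := exists_pos_pow_two_mul_eq_det
    (det_mul_transpose_pos_of_rank_eq (by rw [hrank, Fintype.card_fin]))
  obtain ⟨U, V, T, hU, hV, hT, hdiag, hA⟩ :=
    exists_geometric_mean_decomposition_of_pow_eq_det h A hd hdet
  exact ⟨U, V, T, d, (mem_orthogonalGroup_iff _ _).mp hU, (mem_orthogonalGroup_iff _ _).mp hV,
    hT, hA, hd, hdiag, hdet⟩
end

section
/- (Joint equi-diagonal triangularization, JET) Let H₁ be a proper real M×N₁ matrix and H₂ a proper real M×N₂ matrix (both with M rows). Then there exist an M×M orthogonal matrix U, an N₁×N₁ orthogonal matrix V₁, and an N₂×N₂ orthogonal matrix V₂ such that T₁ := Uᵀ * H₁ * V₁ and T₂ := Uᵀ * H₂ * V₂ are generalized lower-triangular matrices whose diagonal entries are positive and equal: T₁ i i = T₂ i i > 0 for every i = 1,…,M, and ∏_{i=1}^{M} T₁ i i = 1. -/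
/-!
Write `Hₖ = Sₖ [I | 0] Wₖᵀ` with `Sₖ` square and `Wₖ` orthogonal (Gram–Schmidt on the rows of
`Hₖ`); then `|det Sₖ| = 1`. The heart of the matter is that any square `F` with `|det F| = 1`
is `Q' R Qᵀ` with `Q, Q'` orthogonal and `R` unitriangular: by the intermediate value theorem
on the unit sphere some unit `v` has `‖F v‖ = 1`, and taking `v` and `F v` as first basis
vectors reduces the size by one. Applied to `F = S₁⁻¹ S₂` this gives `P₁ᵀ S₁⁻¹ S₂ P₂ = N`
lower unitriangular. With a QL decomposition `S₁ P₁ = U T₁` (`T₁` lower triangular with positive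
diagonal) one gets `Uᵀ S₂ P₂ = T₁ N`, which has the same diagonal as `T₁`. Finally `Pₖ` is
extended by the identity on the last `Nₖ - M` coordinates.
-/

open Matrix InnerProductSpace Module

namespace InnerProductSpace

variable {E : Type*} [NormedAddCommGroup E] [InnerProductSpace ℝ E]
  {ι : Type*} [LinearOrder ι] [LocallyFiniteOrderBot ι] [WellFoundedLT ι]

theorem inner_gramSchmidt_self (f : ι → E) (i : ι) :
    ⟪gramSchmidt ℝ f i, f i⟫_ℝ = ‖gramSchmidt ℝ f i‖ ^ 2 := by
  conv_lhs => rw [gramSchmidt_def'' ℝ f i]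
  rw [inner_add_right, inner_sum, real_inner_self_eq_norm_sq, add_eq_left]
  refine Finset.sum_eq_zero fun k hk => ?_
  rw [inner_smul_right, gramSchmidt_orthogonal ℝ f (Finset.mem_Iio.1 hk).ne', mul_zero]

theorem inner_gramSchmidtOrthonormalBasis_self_nonneg [Fintype ι] [FiniteDimensional ℝ E]
    (h : finrank ℝ E = Fintype.card ι) (f : ι → E) (i : ι) :
    0 ≤ ⟪gramSchmidtOrthonormalBasis h f i, f i⟫_ℝ := by
  by_cases hi : gramSchmidtNormed ℝ f i = 0
  · rw [inner_gramSchmidtOrthonormalBasis_eq_zero h hi]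
  · rw [gramSchmidtOrthonormalBasis_apply h hi, gramSchmidtNormed, real_inner_smul_left,
      inner_gramSchmidt_self]
    positivity

end InnerProductSpace

namespace OrthonormalBasis

theorem exists_apply_eq {ι E : Type*} [Fintype ι] [NormedAddCommGroup E]
    [InnerProductSpace ℝ E] [FiniteDimensional ℝ E] (h : finrank ℝ E = Fintype.card ι)
    (i₀ : ι) {x : E} (hx : ‖x‖ = 1) : ∃ b : OrthonormalBasis ι ℝ E, b i₀ = x := by
  have hv : Orthonormal ℝ (({i₀} : Set ι).domRestrict fun _ => x) := by
    rw [orthonormal_iff_ite]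
    rintro ⟨i, rfl⟩ ⟨j, rfl⟩
    simp [hx]
  obtain ⟨b, hb⟩ := hv.exists_orthonormalBasis_extension_of_card_eq h
  exact ⟨b, hb i₀ rfl⟩

variable {ι κ : Type*} [Fintype ι] [Fintype κ]

noncomputable def colMatrix (b : OrthonormalBasis κ ℝ (EuclideanSpace ℝ ι)) : Matrix ι κ ℝ :=
  Matrix.of fun i j => b j i

theorem colMatrix_mem_orthogonalGroup [DecidableEq ι]
    (b : OrthonormalBasis ι ℝ (EuclideanSpace ℝ ι)) :
    b.colMatrix ∈ orthogonalGroup ι ℝ := by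
  convert (EuclideanSpace.basisFun ι ℝ).toMatrix_orthonormalBasis_mem_orthogonal b
  ext
  simp [colMatrix, Module.Basis.toMatrix_apply]

theorem mul_colMatrix_apply {m : Type*} (A : Matrix m ι ℝ)
    (b : OrthonormalBasis κ ℝ (EuclideanSpace ℝ ι)) (i : m) (j : κ) :
    (A * b.colMatrix) i j = ⟪b j, WithLp.toLp 2 (A i)⟫_ℝ := by
  simp [colMatrix, mul_apply, PiLp.inner_apply]

theorem transpose_colMatrix_mul_apply {m : Type*} (A : Matrix ι m ℝ)
    (b : OrthonormalBasis κ ℝ (EuclideanSpace ℝ ι)) (i : κ) (j : m) :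
    (b.colMatrixᵀ * A) i j = ⟪b i, WithLp.toLp 2 (A.col j)⟫_ℝ := by
  simp [colMatrix, mul_apply, PiLp.inner_apply, mul_comm]

theorem transpose_colMatrix_mul_mul_colMatrix_apply [DecidableEq ι] (F : Matrix ι ι ℝ)
    (b b' : OrthonormalBasis κ ℝ (EuclideanSpace ℝ ι)) (i j : κ) :
    (b'.colMatrixᵀ * F * b.colMatrix) i j = ⟪b' i, toEuclideanLin F (b j)⟫_ℝ := by
  rw [Matrix.mul_assoc, transpose_colMatrix_mul_apply]
  congr 2

end OrthonormalBasis

open OrthonormalBasis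

theorem exists_le_one_and_exists_one_le_of_prod_eq_one {ι : Type*} [Fintype ι] [Nonempty ι]
    {μ : ι → ℝ} (hμ : ∀ k, 0 < μ k) (h : ∏ k, μ k = 1) : (∃ i, μ i ≤ 1) ∧ ∃ j, 1 ≤ μ j := by
  have hlog : ∑ k, Real.log (μ k) = 0 := by
    rw [← Real.log_prod fun k _ => (hμ k).ne', h, Real.log_one]
  obtain ⟨i, -, hi⟩ := Finset.exists_le_of_sum_le Finset.univ_nonempty
    (f := fun k => Real.log (μ k)) (g := 0) (by simp [hlog])
  obtain ⟨j, -, hj⟩ := Finset.exists_le_of_sum_le Finset.univ_nonempty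
    (f := 0) (g := fun k => Real.log (μ k)) (by simp [hlog])
  exact ⟨⟨i, (Real.log_nonpos_iff (hμ i).le).1 hi⟩, ⟨j, (Real.log_nonneg_iff (hμ j)).1 hj⟩⟩

namespace Matrix

section Orthogonal

variable {m n R : Type*} [Fintype m] [DecidableEq m] [Fintype n] [DecidableEq n] [CommRing R]

theorem det_sq_eq_one_of_mem_orthogonalGroup {U : Matrix m m R}
    (hU : U ∈ orthogonalGroup m R) : U.det ^ 2 = 1 := by
  simpa [sq, det_transpose] using congr_arg det ((mem_orthogonalGroup_iff m R).1 hU)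

theorem det_ne_zero_of_mem_orthogonalGroup [Nontrivial R] {U : Matrix m m R}
    (hU : U ∈ orthogonalGroup m R) : U.det ≠ 0 := fun h0 => by
  simpa [h0] using det_sq_eq_one_of_mem_orthogonalGroup hU

theorem det_transpose_mul_mul_sq {U V : Matrix m m R} (hU : U ∈ orthogonalGroup m R)
    (hV : V ∈ orthogonalGroup m R) (A : Matrix m m R) : (Uᵀ * A * V).det ^ 2 = A.det ^ 2 := by
  rw [det_mul, det_mul, det_transpose, mul_pow, mul_pow, det_sq_eq_one_of_mem_orthogonalGroup hU,
    det_sq_eq_one_of_mem_orthogonalGroup hV, one_mul, mul_one]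

/-- For `E` with orthonormal rows, the map acting as `P` on the row space of `E` (in the
coordinates given by the rows) and as the identity on its orthogonal complement. -/
def extendByOne (E : Matrix m n R) (P : Matrix m m R) : Matrix n n R :=
  Eᵀ * P * E + (1 - Eᵀ * E)

omit [DecidableEq m] [Fintype n] in
theorem transpose_extendByOne (E : Matrix m n R) (P : Matrix m m R) :
    (extendByOne E P)ᵀ = extendByOne E Pᵀ := by
  simp [extendByOne, transpose_mul, Matrix.mul_assoc]

variable {E : Matrix m n R}

theorem mul_extendByOne (hE : E * Eᵀ = 1) (P : Matrix m m R) :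
    E * extendByOne E P = P * E := by
  simp [extendByOne, Matrix.mul_add, Matrix.mul_sub, ← Matrix.mul_assoc, hE]

theorem extendByOne_mul_transpose (hE : E * Eᵀ = 1) (P : Matrix m m R) :
    extendByOne E P * Eᵀ = Eᵀ * P := by
  simp [extendByOne, Matrix.add_mul, Matrix.sub_mul, Matrix.mul_assoc, hE]

omit [DecidableEq m] in
theorem extendByOne_mulVec (P : Matrix m m R) {x : n → R} (hx : E *ᵥ x = 0) :
    extendByOne E P *ᵥ x = x := by
  simp [extendByOne, add_mulVec, sub_mulVec, ← mulVec_mulVec, hx]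

theorem extendByOne_mem_orthogonalGroup (hE : E * Eᵀ = 1) {P : Matrix m m R}
    (hP : P ∈ orthogonalGroup m R) : extendByOne E P ∈ orthogonalGroup n R := by
  rw [mem_orthogonalGroup_iff] at hP ⊢
  have hE' (X : Matrix m n R) : E * (Eᵀ * X) = X := by rw [← Matrix.mul_assoc, hE, Matrix.one_mul]
  have hP' (X : Matrix m n R) : P * (Pᵀ * X) = X := by rw [← Matrix.mul_assoc, hP, Matrix.one_mul]
  rw [transpose_extendByOne]
  simp only [extendByOne, Matrix.mul_add, Matrix.add_mul, Matrix.mul_sub, Matrix.sub_mul,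
    Matrix.mul_assoc, hE', hP', Matrix.mul_one, Matrix.one_mul]
  abel

end Orthogonal

section Selection

/-! For an injective `e : m → n`, `(1 : Matrix n n R).submatrix e id` consists of the rows of
the identity indexed by `e`; for `e = Fin.castLE h` it is the block matrix `[I | 0]`. -/

variable {l m n p R : Type*} [DecidableEq n] [Semiring R] {e : m → n}

theorem mul_submatrix_one_id_apply [Fintype m] (he : Function.Injective e) (X : Matrix l m R)
    (i : l) (k : m) : (X * (1 : Matrix n n R).submatrix e id) i (e k) = X i k := by
  classical
  simp [mul_apply, one_apply, he.eq_iff]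

theorem mul_submatrix_one_id_apply_of_notMem_range [Fintype m] (X : Matrix l m R) (i : l)
    {j : n} (hj : j ∉ Set.range e) : (X * (1 : Matrix n n R).submatrix e id) i j = 0 := by
  refine Finset.sum_eq_zero fun k _ => ?_
  simp [show e k ≠ j from fun h => hj ⟨k, h⟩]

variable [Fintype n]

theorem submatrix_one_id_mul (X : Matrix n p R) :
    (1 : Matrix n n R).submatrix e id * X = X.submatrix e id := by
  ext; simp [mul_apply, one_apply]

theorem mul_transpose_submatrix_one_id (X : Matrix p n R) :
    X * ((1 : Matrix n n R).submatrix e id)ᵀ = X.submatrix id e := by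
  ext; simp [mul_apply, one_apply]

theorem submatrix_one_id_mul_mul_transpose (X : Matrix n n R) :
    (1 : Matrix n n R).submatrix e id * X * ((1 : Matrix n n R).submatrix e id)ᵀ =
      X.submatrix e e := by
  rw [submatrix_one_id_mul, mul_transpose_submatrix_one_id, submatrix_submatrix]
  rfl

theorem submatrix_one_id_mulVec (x : n → R) :
    (1 : Matrix n n R).submatrix e id *ᵥ x = x ∘ e := by
  ext; simp [mulVec, dotProduct, one_apply]

theorem submatrix_one_id_mul_transpose [DecidableEq m] (he : Function.Injective e) :
    (1 : Matrix n n R).submatrix e id * ((1 : Matrix n n R).submatrix e id)ᵀ = 1 := by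
  rw [mul_transpose_submatrix_one_id, submatrix_submatrix, Function.id_comp, Function.comp_id,
    submatrix_one e he]

theorem eq_mul_transpose_submatrix_one_id_mul [Fintype m] (he : Function.Injective e)
    {X : Matrix l n R} (hX : ∀ i, ∀ j ∉ Set.range e, X i j = 0) :
    X = X * ((1 : Matrix n n R).submatrix e id)ᵀ * (1 : Matrix n n R).submatrix e id := by
  ext i j
  by_cases hj : j ∈ Set.range e
  · obtain ⟨k, rfl⟩ := hj
    rw [mul_submatrix_one_id_apply he, mul_transpose_submatrix_one_id, submatrix_apply, id]
  · rw [mul_submatrix_one_id_apply_of_notMem_range _ _ hj, hX i j hj]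

end Selection

section Triangular

variable {R : Type*} [Semiring R]

theorem IsLowerTriangular.mul_apply_self {ι : Type*} [Fintype ι] [LinearOrder ι]
    {A B : Matrix ι ι R} (hA : A.IsLowerTriangular) (hB : B.IsLowerTriangular) (i : ι) :
    (A * B) i i = A i i * B i i := by
  refine Finset.sum_eq_single i (fun k _ hki => ?_) (by simp)
  change A i k * B k i = 0
  rcases hki.lt_or_gt with hk | hk
  · rw [hB hk, mul_zero]
  · rw [hA hk, zero_mul]

theorem IsLowerTriangular.mul_submatrix_one_castLE_apply_of_lt {M N : ℕ} (h : M ≤ N)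
    {T : Matrix (Fin M) (Fin M) R} (hT : T.IsLowerTriangular) {i : Fin M} {j : Fin N}
    (hij : (i : ℕ) < j) :
    (T * (1 : Matrix (Fin N) (Fin N) R).submatrix (Fin.castLE h) id) i j = 0 := by
  by_cases hj : (j : ℕ) < M
  · rw [show j = Fin.castLE h ⟨j, hj⟩ from rfl,
      mul_submatrix_one_id_apply (Fin.castLE_injective h)]
    exact hT (show i < ⟨j, hj⟩ from hij)
  · exact mul_submatrix_one_id_apply_of_notMem_range _ _ (by rintro ⟨k, rfl⟩; exact hj k.2)

variable {n : ℕ}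

theorem det_eq_det_submatrix_succ_of_mulVec_single_zero {R : Type*} [CommRing R]
    {Y : Matrix (Fin (n + 1)) (Fin (n + 1)) R} (hY : Y *ᵥ Pi.single 0 1 = Pi.single 0 1) :
    Y.det = (Y.submatrix Fin.succ Fin.succ).det := by
  have hcol (i) : Y i 0 = (Pi.single 0 1 : Fin (n + 1) → R) i := by
    rw [← col_apply Y, ← hY, mulVec_single_one]
  rw [det_succ_column_zero, Fin.sum_univ_succ]
  simp [hcol]

theorem upperUnitriangular_of_mulVec_single_zero {Y : Matrix (Fin (n + 1)) (Fin (n + 1)) R}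
    (hY : Y *ᵥ Pi.single 0 1 = Pi.single 0 1)
    (hY₁ : (Y.submatrix Fin.succ Fin.succ).IsUpperTriangular ∧
      ∀ i, Y.submatrix Fin.succ Fin.succ i i = 1) :
    Y.IsUpperTriangular ∧ ∀ i, Y i i = 1 := by
  have hcol (i) : Y i 0 = (Pi.single 0 1 : Fin (n + 1) → R) i := by
    rw [← col_apply Y, ← hY, mulVec_single_one]
  refine ⟨fun i j hij => ?_, fun i => ?_⟩
  · induction i using Fin.cases with
    | zero => exact absurd hij (Fin.not_lt_zero _)
    | succ i =>
      induction j using Fin.cases with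
      | zero => simp [hcol]
      | succ j => exact hY₁.1 (Fin.succ_lt_succ_iff.1 (id hij))
  · induction i using Fin.cases with
    | zero => simp [hcol]
    | succ i => exact hY₁.2 i

end Triangular

theorem exists_norm_eq_one_norm_toEuclideanLin_eq_one {ι : Type*} [Fintype ι]
    [DecidableEq ι] [Nonempty ι] {F : Matrix ι ι ℝ} (hF : F.det ^ 2 = 1) :
    ∃ x : EuclideanSpace ℝ ι, ‖x‖ = 1 ∧ ‖toEuclideanLin F x‖ = 1 := by
  have hA : (Fᵀ * F).IsHermitian := by
    simpa [conjTranspose_eq_transpose_of_trivial] using isHermitian_conjTranspose_mul_self F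
  set μ := hA.eigenvalues
  set b := hA.eigenvectorBasis
  let q : EuclideanSpace ℝ ι → ℝ := fun x => ‖toEuclideanLin F x‖ ^ 2
  have hq (k) : q (b k) = μ k := by
    rw [show μ k = _ from hA.eigenvalues_eq k, ← mulVec_mulVec, dotProduct_mulVec,
      vecMul_transpose]
    simp only [q, toLpLin_apply, EuclideanSpace.real_norm_sq_eq]
    simp [dotProduct, sq, b]
  have hprod : ∏ k, μ k = 1 := by
    have := hA.det_eq_prod_eigenvalues
    rw [det_mul, det_transpose, ← sq, hF] at this
    exact_mod_cast this.symm
  have hμ (k) : 0 < μ k := lt_of_le_of_ne (hq k ▸ by positivity)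
    (Finset.prod_ne_zero_iff.1 (hprod ▸ one_ne_zero) k (Finset.mem_univ k)).symm
  obtain ⟨⟨i, hi⟩, ⟨j, hj⟩⟩ := exists_le_one_and_exists_one_le_of_prod_eq_one hμ hprod
  have hb (k) : b k ∈ Metric.sphere (0 : EuclideanSpace ℝ ι) 1 :=
    mem_sphere_zero_iff_norm.2 (b.orthonormal.1 k)
  suffices ∃ x ∈ Metric.sphere (0 : EuclideanSpace ℝ ι) 1, q x = 1 by
    obtain ⟨x, hx, hqx⟩ := this
    exact ⟨x, mem_sphere_zero_iff_norm.1 hx,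
      (pow_eq_one_iff_of_nonneg (norm_nonneg _) two_ne_zero).1 hqx⟩
  by_cases hij : i = j
  · exact ⟨b i, hb i, by rw [hq]; exact le_antisymm hi (hij ▸ hj)⟩
  have hconn : IsPreconnected (Metric.sphere (0 : EuclideanSpace ℝ ι) 1) := by
    refine (isConnected_sphere ?_ 0 zero_le_one).isPreconnected
    rw [← Module.finrank_eq_rank, finrank_euclideanSpace]
    exact_mod_cast Fintype.one_lt_card_iff.2 ⟨i, j, hij⟩
  have hcont : Continuous q := ((toEuclideanLin F).continuous_of_finiteDimensional.norm).pow 2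
  exact hconn.intermediate_value (hb i) (hb j) hcont.continuousOn
    ⟨(hq i).symm ▸ hi, (hq j).symm ▸ hj⟩

theorem exists_orthogonal_transpose_mul_mul_mulVec_single {ι : Type*} [Fintype ι]
    [DecidableEq ι] {F : Matrix ι ι ℝ} (hF : F.det ^ 2 = 1) (i₀ : ι) :
    ∃ Q ∈ orthogonalGroup ι ℝ, ∃ Q' ∈ orthogonalGroup ι ℝ,
      (Q'ᵀ * F * Q) *ᵥ Pi.single i₀ 1 = Pi.single i₀ 1 := by
  have : Nonempty ι := ⟨i₀⟩
  obtain ⟨x, hx, hFx⟩ := exists_norm_eq_one_norm_toEuclideanLin_eq_one hF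
  have hcard : finrank ℝ (EuclideanSpace ℝ ι) = Fintype.card ι := finrank_euclideanSpace
  obtain ⟨b, hb⟩ := OrthonormalBasis.exists_apply_eq hcard i₀ hx
  obtain ⟨b', hb'⟩ := OrthonormalBasis.exists_apply_eq hcard i₀ hFx
  refine ⟨b.colMatrix, colMatrix_mem_orthogonalGroup b, b'.colMatrix,
    colMatrix_mem_orthogonalGroup b', ?_⟩
  ext i
  rw [mulVec_single_one, col_apply, transpose_colMatrix_mul_mul_colMatrix_apply, hb, ← hb',
    orthonormal_iff_ite.1 b'.orthonormal]
  simp [Pi.single_apply]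

theorem exists_orthogonal_transpose_mul_mul_upperUnitriangular {n : ℕ}
    {F : Matrix (Fin n) (Fin n) ℝ} (hF : F.det ^ 2 = 1) :
    ∃ P ∈ orthogonalGroup (Fin n) ℝ, ∃ P' ∈ orthogonalGroup (Fin n) ℝ,
      (P'ᵀ * F * P).IsUpperTriangular ∧ ∀ i, (P'ᵀ * F * P) i i = 1 := by
  induction n with
  | zero => exact ⟨1, one_mem _, 1, one_mem _, fun i => i.elim0, fun i => i.elim0⟩
  | succ n ih =>
    obtain ⟨Q, hQ, Q', hQ', hG⟩ := exists_orthogonal_transpose_mul_mul_mulVec_single hF 0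
    set G := Q'ᵀ * F * Q
    have hG₁ : (G.submatrix Fin.succ Fin.succ).det ^ 2 = 1 := by
      rw [← det_eq_det_submatrix_succ_of_mulVec_single_zero hG,
        det_transpose_mul_mul_sq hQ' hQ, hF]
    obtain ⟨P, hP, P', hP', hT⟩ := ih hG₁
    set E := (1 : Matrix (Fin (n + 1)) (Fin (n + 1)) ℝ).submatrix Fin.succ id
    have hE : E * Eᵀ = 1 := submatrix_one_id_mul_transpose (Fin.succ_injective n)
    have hE0 : E *ᵥ Pi.single 0 1 = 0 := by
      rw [submatrix_one_id_mulVec]; ext; simp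
    refine ⟨Q * extendByOne E P, mul_mem hQ (extendByOne_mem_orthogonalGroup hE hP),
      Q' * extendByOne E P', mul_mem hQ' (extendByOne_mem_orthogonalGroup hE hP'), ?_⟩
    have hY : (Q' * extendByOne E P')ᵀ * F * (Q * extendByOne E P) =
        extendByOne E P'ᵀ * G * extendByOne E P := by
      rw [transpose_mul, transpose_extendByOne]
      simp only [G, Matrix.mul_assoc]
    have hblock : E * (extendByOne E P'ᵀ * G * extendByOne E P) * Eᵀ = P'ᵀ * (E * G * Eᵀ) * P := by
      simp only [← Matrix.mul_assoc, mul_extendByOne hE]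
      simp only [Matrix.mul_assoc, extendByOne_mul_transpose hE]
    rw [hY]
    refine upperUnitriangular_of_mulVec_single_zero ?_ ?_
    · rw [← mulVec_mulVec, ← mulVec_mulVec, extendByOne_mulVec _ hE0, hG, extendByOne_mulVec _ hE0]
    · rwa [← submatrix_one_id_mul_mul_transpose, hblock, submatrix_one_id_mul_mul_transpose]

theorem exists_orthogonal_mul_apply_eq_zero_of_lt {M N : ℕ} (H : Matrix (Fin M) (Fin N) ℝ) :
    ∃ W ∈ orthogonalGroup (Fin N) ℝ, ∀ (i : Fin M) (j : Fin N), (i : ℕ) < j → (H * W) i j = 0 := by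
  let f : Fin N → EuclideanSpace ℝ (Fin N) := fun j =>
    if hj : (j : ℕ) < M then WithLp.toLp 2 (H ⟨j, hj⟩) else 0
  let b : OrthonormalBasis (Fin N) ℝ _ := gramSchmidtOrthonormalBasis (by simp) f
  refine ⟨b.colMatrix, colMatrix_mem_orthogonalGroup b, fun i j hij => ?_⟩
  have hfi : f ⟨i, hij.trans j.2⟩ = WithLp.toLp 2 (H i) := dif_pos i.2
  rw [mul_colMatrix_apply, ← hfi]
  exact gramSchmidtOrthonormalBasis_inv_triangular _ f (Fin.mk_lt_of_lt_val hij)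

theorem exists_orthogonal_transpose_mul_isLowerTriangular {ι : Type*} [Fintype ι]
    [LinearOrder ι] [LocallyFiniteOrderTop ι] {C : Matrix ι ι ℝ} (hC : C.det ≠ 0) :
    ∃ U ∈ orthogonalGroup ι ℝ, (Uᵀ * C).IsLowerTriangular ∧ ∀ i, 0 < (Uᵀ * C) i i := by
  -- Gram–Schmidt on the columns of `C` in decreasing order makes `Uᵀ C` lower triangular
  let f : ιᵒᵈ → EuclideanSpace ℝ ι := fun j => WithLp.toLp 2 (C.col (OrderDual.ofDual j))
  let b : OrthonormalBasis ιᵒᵈ ℝ _ := gramSchmidtOrthonormalBasis (by simp) f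
  let U := (b.reindex OrderDual.ofDual).colMatrix
  have hUC (i j) : (Uᵀ * C) i j = ⟪b (OrderDual.toDual i), f (OrderDual.toDual j)⟫_ℝ := by
    rw [transpose_colMatrix_mul_apply]
    simp [b, f]
  have hT : (Uᵀ * C).IsLowerTriangular := fun i j hij => by
    rw [hUC]; exact gramSchmidtOrthonormalBasis_inv_triangular _ f hij
  have hU : U ∈ orthogonalGroup ι ℝ := colMatrix_mem_orthogonalGroup _
  have hdet : (Uᵀ * C).det ≠ 0 := by
    rw [det_mul, det_transpose]
    exact mul_ne_zero (det_ne_zero_of_mem_orthogonalGroup hU) hC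
  rw [det_of_isLowerTriangular _ hT] at hdet
  refine ⟨U, hU, hT, fun i => lt_of_le_of_ne ?_
    (Finset.prod_ne_zero_iff.1 hdet i (Finset.mem_univ i)).symm⟩
  rw [hUC]
  exact inner_gramSchmidtOrthonormalBasis_self_nonneg _ f _

theorem exists_orthogonal_jointly_isLowerTriangular_of_det_sq_eq {n : ℕ}
    {S₁ S₂ : Matrix (Fin n) (Fin n) ℝ} (hS₁ : S₁.det ≠ 0) (hS : S₁.det ^ 2 = S₂.det ^ 2) :
    ∃ U ∈ orthogonalGroup (Fin n) ℝ, ∃ P₁ ∈ orthogonalGroup (Fin n) ℝ,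
      ∃ P₂ ∈ orthogonalGroup (Fin n) ℝ,
      (Uᵀ * S₁ * P₁).IsLowerTriangular ∧ (Uᵀ * S₂ * P₂).IsLowerTriangular ∧
      (∀ i, (Uᵀ * S₂ * P₂) i i = (Uᵀ * S₁ * P₁) i i) ∧ ∀ i, 0 < (Uᵀ * S₁ * P₁) i i := by
  have hG : (S₁⁻¹ * S₂)ᵀ.det ^ 2 = 1 := by
    rw [det_transpose, det_mul, det_nonsing_inv, Ring.inverse_eq_inv', mul_pow, inv_pow, ← hS,
      inv_mul_cancel₀ (pow_ne_zero 2 hS₁)]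
  obtain ⟨Q, hQ, Q', hQ', hN, hN1⟩ := exists_orthogonal_transpose_mul_mul_upperUnitriangular hG
  obtain ⟨U, hU, hT, hTpos⟩ := exists_orthogonal_transpose_mul_isLowerTriangular (C := S₁ * Q)
    (by simp [hS₁, det_ne_zero_of_mem_orthogonalGroup hQ])
  rw [← Matrix.mul_assoc] at hT hTpos
  have hfac : Uᵀ * S₂ * Q' = Uᵀ * S₁ * Q * (Q'ᵀ * (S₁⁻¹ * S₂)ᵀ * Q)ᵀ := by
    have hQQ : Q * Qᵀ = 1 := (mem_orthogonalGroup_iff _ _).1 hQ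
    have hSS : S₁ * S₁⁻¹ = 1 := mul_nonsing_inv _ (isUnit_iff_ne_zero.2 hS₁)
    simp only [transpose_mul, transpose_transpose, Matrix.mul_assoc]
    rw [← Matrix.mul_assoc Q, hQQ, Matrix.one_mul, ← Matrix.mul_assoc S₁, hSS, Matrix.one_mul]
  refine ⟨U, hU, Q, hQ, Q', hQ', hT, ?_, fun i => ?_, hTpos⟩
  · rw [hfac]; exact hT.mul hN.transpose
  · rw [hfac, IsLowerTriangular.mul_apply_self hT hN.transpose, transpose_apply, hN1, mul_one]

theorem exists_mul_orthogonal_eq_mul_submatrix_one_castLE {M N : ℕ} (h : M ≤ N)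
    (H : Matrix (Fin M) (Fin N) ℝ) :
    ∃ S : Matrix (Fin M) (Fin M) ℝ, S * Sᵀ = H * Hᵀ ∧ ∀ P ∈ orthogonalGroup (Fin M) ℝ,
      ∃ V ∈ orthogonalGroup (Fin N) ℝ,
        H * V = S * P * (1 : Matrix (Fin N) (Fin N) ℝ).submatrix (Fin.castLE h) id := by
  obtain ⟨W, hW, hHW⟩ := exists_orthogonal_mul_apply_eq_zero_of_lt H
  set E := (1 : Matrix (Fin N) (Fin N) ℝ).submatrix (Fin.castLE h) id
  have hE : E * Eᵀ = 1 := submatrix_one_id_mul_transpose (Fin.castLE_injective h)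
  have hS : H * W = H * W * Eᵀ * E :=
    eq_mul_transpose_submatrix_one_id_mul (Fin.castLE_injective h) fun i j hj =>
      hHW i j (i.2.trans_le (not_lt.1 fun hjM => hj ⟨⟨j, hjM⟩, rfl⟩))
  refine ⟨H * W * Eᵀ, ?_, fun P hP =>
    ⟨W * extendByOne E P, mul_mem hW (extendByOne_mem_orthogonalGroup hE hP), ?_⟩⟩
  · calc H * W * Eᵀ * (H * W * Eᵀ)ᵀ = H * W * Eᵀ * E * (H * W * Eᵀ * E)ᵀ := by
          rw [transpose_mul _ E, Matrix.mul_assoc _ E, ← Matrix.mul_assoc E, hE, Matrix.one_mul]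
      _ = H * (W * Wᵀ) * Hᵀ := by rw [← hS, transpose_mul]; simp only [Matrix.mul_assoc]
      _ = H * Hᵀ := by rw [(mem_orthogonalGroup_iff _ _).1 hW, Matrix.mul_one]
  · conv_lhs => rw [← Matrix.mul_assoc, hS]
    rw [Matrix.mul_assoc _ E, mul_extendByOne hE, ← Matrix.mul_assoc]

end Matrix

theorem joint_equi_diagonal_triangularization_general
    (M N₁ N₂ : ℕ) (h1 : M ≤ N₁) (h2 : M ≤ N₂)
    (H₁ : Matrix (Fin M) (Fin N₁) ℝ) (H₂ : Matrix (Fin M) (Fin N₂) ℝ)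
    (hd1 : (H₁ * H₁ᵀ).det = 1)
    (hd2 : (H₂ * H₂ᵀ).det = 1) :
    ∃ (U : Matrix (Fin M) (Fin M) ℝ) (V₁ : Matrix (Fin N₁) (Fin N₁) ℝ)
      (V₂ : Matrix (Fin N₂) (Fin N₂) ℝ),
      U * Uᵀ = 1 ∧ V₁ * V₁ᵀ = 1 ∧ V₂ * V₂ᵀ = 1 ∧
      (∀ (i : Fin M) (j : Fin N₁), (i : ℕ) < (j : ℕ) → (Uᵀ * H₁ * V₁) i j = 0) ∧
      (∀ (i : Fin M) (j : Fin N₂), (i : ℕ) < (j : ℕ) → (Uᵀ * H₂ * V₂) i j = 0) ∧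
      (∀ i : Fin M,
        (Uᵀ * H₁ * V₁) i (Fin.castLE h1 i) = (Uᵀ * H₂ * V₂) i (Fin.castLE h2 i)) ∧
      (∀ i : Fin M, 0 < (Uᵀ * H₁ * V₁) i (Fin.castLE h1 i)) ∧
      ∏ i : Fin M, (Uᵀ * H₁ * V₁) i (Fin.castLE h1 i) = 1 := by
  obtain ⟨S₁, hSS₁, hV₁⟩ := exists_mul_orthogonal_eq_mul_submatrix_one_castLE h1 H₁
  obtain ⟨S₂, hSS₂, hV₂⟩ := exists_mul_orthogonal_eq_mul_submatrix_one_castLE h2 H₂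
  have hS₁ : S₁.det ^ 2 = 1 := by rw [← hd1, ← hSS₁, det_mul, det_transpose, sq]
  have hS₂ : S₂.det ^ 2 = 1 := by rw [← hd2, ← hSS₂, det_mul, det_transpose, sq]
  obtain ⟨U, hU, P₁, hP₁, P₂, hP₂, hT₁, hT₂, hdiag, hpos⟩ :=
    exists_orthogonal_jointly_isLowerTriangular_of_det_sq_eq (fun h0 => by simp [h0] at hS₁)
      (hS₁.trans hS₂.symm)
  obtain ⟨V₁, hV₁, hHV₁⟩ := hV₁ P₁ hP₁
  obtain ⟨V₂, hV₂, hHV₂⟩ := hV₂ P₂ hP₂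
  have hdet := (det_transpose_mul_mul_sq hU hP₁ S₁).trans hS₁
  refine ⟨U, V₁, V₂, ?_⟩
  rw [Matrix.mul_assoc _ H₁, hHV₁, Matrix.mul_assoc _ H₂, hHV₂]
  simp only [← Matrix.mul_assoc, mul_submatrix_one_id_apply (Fin.castLE_injective _)]
  rw [det_of_isLowerTriangular _ hT₁] at hdet
  exact ⟨(mem_orthogonalGroup_iff _ _).1 hU, (mem_orthogonalGroup_iff _ _).1 hV₁,
    (mem_orthogonalGroup_iff _ _).1 hV₂, fun i j => hT₁.mul_submatrix_one_castLE_apply_of_lt h1,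
    fun i j => hT₂.mul_submatrix_one_castLE_apply_of_lt h2, fun i => (hdiag i).symm, hpos,
    (pow_eq_one_iff_of_nonneg (Finset.prod_nonneg fun i _ => (hpos i).le) two_ne_zero).1 hdet⟩

/-- **Joint equi-diagonal triangularization, JET.** Two proper
matrices `H₁` (of size `M × N₁`) and `H₂` (of size `M × N₂`) can be jointly
triangularized by orthogonal matrices `U`, `V₁`, `V₂` so that
`T₁ = Uᵀ * H₁ * V₁` and `T₂ = Uᵀ * H₂ * V₂` are generalized lower-triangular
with equal, positive diagonals of unit product. -/
theorem joint_equi_diagonal_triangularization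
    (M N₁ N₂ : ℕ) (h1 : M ≤ N₁) (h2 : M ≤ N₂)
    (H₁ : Matrix (Fin M) (Fin N₁) ℝ) (H₂ : Matrix (Fin M) (Fin N₂) ℝ)
    (hr1 : H₁.rank = M) (hd1 : (H₁ * H₁ᵀ).det = 1)
    (hr2 : H₂.rank = M) (hd2 : (H₂ * H₂ᵀ).det = 1) :
    ∃ (U : Matrix (Fin M) (Fin M) ℝ) (V₁ : Matrix (Fin N₁) (Fin N₁) ℝ)
      (V₂ : Matrix (Fin N₂) (Fin N₂) ℝ),
      U * Uᵀ = 1 ∧ V₁ * V₁ᵀ = 1 ∧ V₂ * V₂ᵀ = 1 ∧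
      (∀ (i : Fin M) (j : Fin N₁), (i : ℕ) < (j : ℕ) → (Uᵀ * H₁ * V₁) i j = 0) ∧
      (∀ (i : Fin M) (j : Fin N₂), (i : ℕ) < (j : ℕ) → (Uᵀ * H₂ * V₂) i j = 0) ∧
      (∀ i : Fin M,
        (Uᵀ * H₁ * V₁) i (Fin.castLE h1 i) = (Uᵀ * H₂ * V₂) i (Fin.castLE h2 i)) ∧
      (∀ i : Fin M, 0 < (Uᵀ * H₁ * V₁) i (Fin.castLE h1 i)) ∧
      ∏ i : Fin M, (Uᵀ * H₁ * V₁) i (Fin.castLE h1 i) = 1 :=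
  joint_equi_diagonal_triangularization_general M N₁ N₂ h1 h2 H₁ H₂ hd1 hd2
end

section
/- (High-SNR behavior of the MIMO capacity; Lemma 1) Let H be a proper real M×N matrix and for P > 0 let C(H, P) be the supremum of (1/2) · log det(I_M + H * K * Hᵀ) over all N×N real positive-semidefinite matrices K with trace K ≤ P. Then C(H, P) − (M/2) · log(P/M) tends to 0 as P → ∞. -/
/-!
Write `G = H Hᵀ`, positive definite with `det G = 1`. The input `K = (P/M) Hᵀ G⁻¹ H` spends
exactly the power `P` and gives `det (I + (P/M) G) ≥ det ((P/M) G) = (P/M)^M`. Conversely,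
whitening by `S = G^{-1/2}` (so `det S = ±1`, and `W = S H` has orthonormal rows) turns
`I + H K Hᵀ` into `G⁻¹ + W K Wᵀ` without changing the determinant; AM-GM on the eigenvalues of
this matrix bounds its determinant by `((tr G⁻¹ + P) / M)^M`. The two bounds on `C(H, P)` differ
by `(M/2) log (1 + tr G⁻¹ / P) → 0`.
-/

open Matrix

noncomputable def mimoCapacity (M N : ℕ) (H : Matrix (Fin M) (Fin N) ℝ) (P : ℝ) : ℝ :=
  sSup {r : ℝ | ∃ K : Matrix (Fin N) (Fin N) ℝ, K.PosSemidef ∧ K.trace ≤ P ∧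
    r = (1 / 2 : ℝ) * Real.log ((1 + H * K * Hᵀ).det)}

open Finset in
theorem Real.prod_le_sum_div_card_pow {ι : Type*} (s : Finset ι) {z : ι → ℝ}
    (hz : ∀ i ∈ s, 0 ≤ z i) : ∏ i ∈ s, z i ≤ ((∑ i ∈ s, z i) / #s) ^ #s := by
  rcases s.eq_empty_or_nonempty with rfl | hs
  · simp
  have hamgm := Real.geom_mean_le_arith_mean s (fun _ => 1) z (fun _ _ => zero_le_one)
    (by simpa using hs.card_pos) hz
  simp only [Real.rpow_one, sum_const, nsmul_eq_mul, mul_one, one_mul] at hamgm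
  calc ∏ i ∈ s, z i = ((∏ i ∈ s, z i) ^ ((#s : ℝ)⁻¹)) ^ #s :=
        (Real.rpow_inv_natCast_pow (prod_nonneg hz) hs.card_pos.ne').symm
    _ ≤ ((∑ i ∈ s, z i) / #s) ^ #s := by gcongr; exact Real.rpow_nonneg (prod_nonneg hz) _

namespace Matrix

variable {m n : Type*} [Fintype m] [DecidableEq m] [Fintype n]

theorem IsHermitian.det_cfc {A : Matrix m m ℝ} (hA : A.IsHermitian) (f : ℝ → ℝ) :
    (cfc f A).det = ∏ i, f (hA.eigenvalues i) := by
  rw [hA.cfc_eq]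
  simp [IsHermitian.cfc, -Unitary.conjStarAlgAut_apply, det_diagonal]

theorem IsHermitian.det_one_add {A : Matrix m m ℝ} (hA : A.IsHermitian) :
    (1 + A).det = ∏ i, (1 + hA.eigenvalues i) := by
  rw [← hA.det_cfc, cfc_const_add 1 (fun x => x) A, cfc_id' ℝ A,
    Algebra.algebraMap_eq_smul_one, one_smul]

theorem PosSemidef.det_le_det_one_add {A : Matrix m m ℝ} (hA : A.PosSemidef) :
    A.det ≤ (1 + A).det := by
  rw [hA.1.det_one_add, hA.1.det_eq_prod_eigenvalues]
  exact Finset.prod_le_prod (fun i _ => by simpa using hA.eigenvalues_nonneg i)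
    (fun i _ => by simp)

theorem PosSemidef.det_le_trace_div_card_pow {A : Matrix m m ℝ} (hA : A.PosSemidef) :
    A.det ≤ (A.trace / Fintype.card m) ^ Fintype.card m := by
  rw [hA.1.det_eq_prod_eigenvalues, hA.1.trace_eq_sum_eigenvalues]
  simpa using Real.prod_le_sum_div_card_pow Finset.univ fun i _ => hA.eigenvalues_nonneg i

theorem trace_mul_mul_transpose_le_of_mul_transpose_eq_one {W : Matrix m n ℝ} (hW : W * Wᵀ = 1)
    {K : Matrix n n ℝ} (hK : K.PosSemidef) : (W * K * Wᵀ).trace ≤ K.trace := by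
  classical
  -- `Q = Wᵀ W` is an orthogonal projection and `tr K - tr (K Q) = tr ((1 - Q) K (1 - Q)) ≥ 0`.
  set Q := Wᵀ * W
  have hQ : (1 - Q) * (1 - Q) = 1 - Q := by
    have : Q * Q = Q := by
      simp only [Q, Matrix.mul_assoc, ← Matrix.mul_assoc W, hW, Matrix.one_mul]
    rw [sub_mul, one_mul, mul_sub, mul_one, this, sub_self, sub_zero]
  have hsymm : (1 - Q)ᵀ = 1 - Q := by
    simp [Q, transpose_sub]
  have hcompl : 0 ≤ ((1 - Q) * K * (1 - Q)).trace := by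
    have := (hK.mul_mul_conjTranspose_same (1 - Q)).trace_nonneg
    rwa [conjTranspose_eq_transpose_of_trivial, hsymm] at this
  calc (W * K * Wᵀ).trace = (K * Q).trace := by
        rw [trace_mul_comm, ← Matrix.mul_assoc, trace_mul_comm]
    _ ≤ K.trace := by
        rw [trace_mul_cycle, hQ, sub_mul, one_mul, trace_sub, trace_mul_comm] at hcompl
        linarith

theorem posDef_mul_transpose_of_det_ne_zero {H : Matrix m n ℝ} (h : (H * Hᵀ).det ≠ 0) :
    (H * Hᵀ).PosDef := by
  have := posSemidef_self_mul_conjTranspose H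
  rw [conjTranspose_eq_transpose_of_trivial] at this
  exact this.posDef_iff_det_ne_zero.mpr h

open scoped MatrixOrder in
theorem exists_mul_transpose_eq_one_and_det_one_add_eq {H : Matrix m n ℝ}
    (hdet : (H * Hᵀ).det = 1) :
    ∃ W : Matrix m n ℝ, W * Wᵀ = 1 ∧
      ∀ K : Matrix n n ℝ, (1 + H * K * Hᵀ).det = ((H * Hᵀ)⁻¹ + W * K * Wᵀ).det := by
  set G := H * Hᵀ
  have hGunit : IsUnit G.det := by simp [G, hdet]
  have hGinv : G⁻¹.PosDef := (posDef_mul_transpose_of_det_ne_zero hGunit.ne_zero).inv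
  set S := CFC.sqrt G⁻¹
  have hS : S.PosSemidef := (CFC.sqrt_nonneg _).posSemidef
  have hSS : S * S = G⁻¹ := CFC.sqrt_mul_sqrt_self _ hGinv.posSemidef.nonneg
  have hST : Sᵀ = S := by simpa [conjTranspose_eq_transpose_of_trivial] using hS.1.eq
  have hSdet : S.det * S.det = 1 := by
    rw [← det_mul, hSS, det_nonsing_inv, hdet, Ring.inverse_one]
  refine ⟨S * H, ?_, fun K => ?_⟩
  · have : S * (S * G) = 1 := by rw [← Matrix.mul_assoc, hSS, nonsing_inv_mul _ hGunit]
    simpa only [G, transpose_mul, hST, Matrix.mul_assoc] using mul_eq_one_comm.mp this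
  · calc (1 + H * K * Hᵀ).det = S.det * (1 + H * K * Hᵀ).det * S.det := by
          rw [mul_right_comm, hSdet, one_mul]
      _ = (S * (1 + H * K * Hᵀ) * S).det := by rw [det_mul, det_mul]
      _ = (G⁻¹ + S * H * K * (S * H)ᵀ).det := by
          rw [mul_add, add_mul, mul_one, hSS]
          simp only [transpose_mul, hST, Matrix.mul_assoc]

theorem det_one_add_mul_mul_transpose_le {H : Matrix m n ℝ} (hdet : (H * Hᵀ).det = 1)
    {K : Matrix n n ℝ} (hK : K.PosSemidef) :
    (1 + H * K * Hᵀ).det ≤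
      (((H * Hᵀ)⁻¹.trace + K.trace) / Fintype.card m) ^ Fintype.card m := by
  obtain ⟨W, hW, hdet_eq⟩ := exists_mul_transpose_eq_one_and_det_one_add_eq hdet
  have hGinv : (H * Hᵀ)⁻¹.PosDef := (posDef_mul_transpose_of_det_ne_zero (by simp [hdet])).inv
  have hpsd : ((H * Hᵀ)⁻¹ + W * K * Wᵀ).PosSemidef :=
    hGinv.posSemidef.add (by simpa using hK.mul_mul_conjTranspose_same W)
  calc (1 + H * K * Hᵀ).det = ((H * Hᵀ)⁻¹ + W * K * Wᵀ).det := hdet_eq K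
    _ ≤ (((H * Hᵀ)⁻¹ + W * K * Wᵀ).trace / Fintype.card m) ^ Fintype.card m :=
        hpsd.det_le_trace_div_card_pow
    _ ≤ (((H * Hᵀ)⁻¹.trace + K.trace) / Fintype.card m) ^ Fintype.card m := by
        gcongr
        · exact div_nonneg hpsd.trace_nonneg (Nat.cast_nonneg _)
        · rw [trace_add]
          exact add_le_add_right (trace_mul_mul_transpose_le_of_mul_transpose_eq_one hW hK) _

end Matrix

open Real Filter Topology

-- Also for `M = 0`, where `P / M = 0` but `0 ^ 0 = 1`.
theorem div_natCast_pow_self_pos {P : ℝ} (hP : 0 < P) (M : ℕ) : 0 < (P / M) ^ M := by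
  rw [div_pow]
  exact div_pos (pow_pos hP M) (by exact_mod_cast Nat.pow_self_pos)

section

variable {M N : ℕ} {H : Matrix (Fin M) (Fin N) ℝ} {P : ℝ}

def achievableRates (H : Matrix (Fin M) (Fin N) ℝ) (P : ℝ) : Set ℝ :=
  {r : ℝ | ∃ K : Matrix (Fin N) (Fin N) ℝ, K.PosSemidef ∧ K.trace ≤ P ∧
    r = (1 / 2 : ℝ) * Real.log ((1 + H * K * Hᵀ).det)}

theorem mimoCapacity_eq_sSup : mimoCapacity M N H P = sSup (achievableRates H P) := rfl

theorem log_det_one_add_mul_mul_transpose_le (hdet : (H * Hᵀ).det = 1) (hP : 0 < P)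
    {K : Matrix (Fin N) (Fin N) ℝ} (hK : K.PosSemidef) (hKP : K.trace ≤ P) :
    log (1 + H * K * Hᵀ).det ≤ M * log (P / M) + M * log (1 + (H * Hᵀ)⁻¹.trace / P) := by
  set c := (H * Hᵀ)⁻¹.trace
  have hc : 0 ≤ c :=
    (posDef_mul_transpose_of_det_ne_zero (by simp [hdet])).inv.posSemidef.trace_nonneg
  have hdet_pos : 0 < (1 + H * K * Hᵀ).det :=
    (PosDef.one.add_posSemidef (by simpa using hK.mul_mul_conjTranspose_same H)).det_pos
  have hbound : (1 + H * K * Hᵀ).det ≤ (P / M) ^ M * (1 + c / P) ^ M := by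
    refine (det_one_add_mul_mul_transpose_le hdet hK).trans ?_
    rw [Fintype.card_fin, ← mul_pow, mul_one_add, div_mul_div_cancel₀' hP.ne', add_comm (P / M),
      ← add_div]
    gcongr
    exact div_nonneg (add_nonneg hc hK.trace_nonneg) (Nat.cast_nonneg M)
  calc log (1 + H * K * Hᵀ).det ≤ log ((P / M) ^ M * (1 + c / P) ^ M) :=
        log_le_log hdet_pos hbound
    _ = M * log (P / M) + M * log (1 + c / P) := by
        rw [log_mul (div_natCast_pow_self_pos hP M).ne' (by positivity), log_pow, log_pow]

theorem mem_upperBounds_achievableRates (hdet : (H * Hᵀ).det = 1) (hP : 0 < P) :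
    M / 2 * log (P / M) + M / 2 * log (1 + (H * Hᵀ)⁻¹.trace / P) ∈
      upperBounds (achievableRates H P) := by
  rintro _ ⟨K, hK, hKP, rfl⟩
  linarith [log_det_one_add_mul_mul_transpose_le hdet hP hK hKP]

theorem mimoCapacity_le (hdet : (H * Hᵀ).det = 1) (hP : 0 < P) :
    mimoCapacity M N H P ≤ M / 2 * log (P / M) + M / 2 * log (1 + (H * Hᵀ)⁻¹.trace / P) := by
  rw [mimoCapacity_eq_sSup]
  exact csSup_le ⟨_, 0, PosSemidef.zero, by simpa using hP.le, rfl⟩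
    (mem_upperBounds_achievableRates hdet hP)

theorem le_mimoCapacity (hdet : (H * Hᵀ).det = 1) (hP : 0 < P) :
    M / 2 * log (P / M) ≤ mimoCapacity M N H P := by
  set G := H * Hᵀ
  have hGunit : IsUnit G.det := by simp [G, hdet]
  have hG : G.PosDef := posDef_mul_transpose_of_det_ne_zero hGunit.ne_zero
  set K := (P / M) • (Hᵀ * G⁻¹ * H)
  have hQ : (Hᵀ * G⁻¹ * H).PosSemidef := by
    simpa using hG.inv.posSemidef.conjTranspose_mul_mul_same H
  have hK : K.PosSemidef := hQ.smul (by positivity)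
  have hKP : K.trace ≤ P := by
    have : (Hᵀ * G⁻¹ * H).trace = M := by
      rw [trace_mul_comm, ← Matrix.mul_assoc, mul_nonsing_inv _ hGunit, trace_one,
        Fintype.card_fin]
    rw [trace_smul, this, smul_eq_mul]
    rcases eq_or_ne (M : ℝ) 0 with hM | hM
    · simp [hM, hP.le]
    · rw [div_mul_cancel₀ _ hM]
  have hHKH : H * K * Hᵀ = (P / M) • G := by
    have : H * (Hᵀ * G⁻¹ * H) * Hᵀ = G * G⁻¹ * G := by simp only [G, Matrix.mul_assoc]
    rw [Matrix.mul_smul, Matrix.smul_mul, this, mul_nonsing_inv _ hGunit, Matrix.one_mul]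
  have hdet_smul : ((P / M) • G).det = (P / M) ^ M := by
    rw [det_smul, hdet, mul_one, Fintype.card_fin]
  calc M / 2 * log (P / M) = 1 / 2 * log ((P / M) • G).det := by
        rw [hdet_smul, log_pow]; ring
    _ ≤ 1 / 2 * log (1 + H * K * Hᵀ).det := by
        rw [hHKH]
        gcongr
        · rw [hdet_smul]; exact div_natCast_pow_self_pos hP M
        · exact (hG.posSemidef.smul (by positivity)).det_le_det_one_add
    _ ≤ mimoCapacity M N H P := by
        rw [mimoCapacity_eq_sSup]
        exact le_csSup ⟨_, mem_upperBounds_achievableRates hdet hP⟩ ⟨K, hK, hKP, rfl⟩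

end

theorem mimoCapacity_high_snr_general
    (M N : ℕ) (H : Matrix (Fin M) (Fin N) ℝ)
    (hdet : (H * Hᵀ).det = 1) :
    Filter.Tendsto
      (fun P : ℝ => mimoCapacity M N H P - (M / 2 : ℝ) * Real.log (P / M))
      Filter.atTop (nhds 0) := by
  have hgap : Tendsto (fun P => M / 2 * log (1 + (H * Hᵀ)⁻¹.trace / P)) atTop (𝓝 0) := by
    have hone : Tendsto (fun P : ℝ => 1 + (H * Hᵀ)⁻¹.trace / P) atTop (𝓝 1) := by
      simpa using (tendsto_const_nhds.div_atTop (tendsto_id (α := ℝ))).const_add 1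
    simpa using (hone.log one_ne_zero).const_mul ((M : ℝ) / 2)
  refine tendsto_of_tendsto_of_tendsto_of_le_of_le' tendsto_const_nhds hgap ?_ ?_
  · filter_upwards [eventually_gt_atTop 0] with P hP
    linarith [le_mimoCapacity (N := N) hdet hP]
  · filter_upwards [eventually_gt_atTop 0] with P hP
    linarith [mimoCapacity_le hdet hP]

/-- **High-SNR behavior of the MIMO capacity; Lemma 1.**
For a proper matrix `H` (i.e. `M ≤ N`, rank `M`, `det (H * Hᵀ) = 1`),
`C(H, P) − (M/2) · log (P/M) → 0` as `P → ∞`. -/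
theorem mimoCapacity_high_snr
    (M N : ℕ) (h : M ≤ N) (H : Matrix (Fin M) (Fin N) ℝ)
    (hrank : H.rank = M) (hdet : (H * Hᵀ).det = 1) :
    Filter.Tendsto
      (fun P : ℝ => mimoCapacity M N H P - (M / 2 : ℝ) * Real.log (P / M))
      Filter.atTop (nhds 0) :=
  mimoCapacity_high_snr_general M N H hdet
end

section
/- (PNC rate is within half a bit of the cut-set bound) For all real P ≥ 0 and C ≥ 0, min( (1/2) · log₂(1 + P), C ) − min( max(0, (1/2) · log₂(1/2 + P)), C ) ≤ 1/2. -/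
theorem min_sub_min_le_of_le_add {α : Type*} [AddCommGroup α] [LinearOrder α]
    [IsOrderedAddMonoid α] {a b c d : α} (h : a ≤ b + d) (hd : 0 ≤ d) :
    min a c - min b c ≤ d := by
  rw [sub_le_iff_le_add']
  calc min a c ≤ min (b + d) (c + d) := min_le_min h (le_add_of_nonneg_right hd)
    _ = min b c + d := min_add_add_right b c d

/-- Doubling the argument of `log₂` costs exactly one bit, and `1 + P ≤ 2 (1/2 + P)`. -/
theorem Real.logb_two_one_add_le_logb_two_half_add_add_one {P : ℝ} (hP : 0 ≤ P) :
    Real.logb 2 (1 + P) ≤ Real.logb 2 (1 / 2 + P) + 1 :=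
  calc Real.logb 2 (1 + P) ≤ Real.logb 2 (2 * (1 / 2 + P)) :=
        Real.logb_le_logb_of_le (by norm_num) (by linarith) (by linarith)
    _ = Real.logb 2 (1 / 2 + P) + 1 := by
        rw [Real.logb_mul (by norm_num) (by linarith), Real.logb_self_eq_one (by norm_num),
          add_comm]

theorem pnc_within_half_bit_of_cutset_general (P C : ℝ) (hP : 0 ≤ P) :
    min ((1 / 2 : ℝ) * Real.logb 2 (1 + P)) C
      - min (max 0 ((1 / 2 : ℝ) * Real.logb 2 (1 / 2 + P))) C ≤ 1 / 2 := by
  refine min_sub_min_le_of_le_add ?_ (by norm_num)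
  calc (1 / 2 : ℝ) * Real.logb 2 (1 + P) ≤ (1 / 2 : ℝ) * Real.logb 2 (1 / 2 + P) + 1 / 2 := by
        linarith [Real.logb_two_one_add_le_logb_two_half_add_add_one hP]
    _ ≤ max 0 ((1 / 2 : ℝ) * Real.logb 2 (1 / 2 + P)) + 1 / 2 := by
        gcongr
        exact le_max_right _ _

/-- **PNC rate is within half a bit of the cut-set bound.**
For all `P ≥ 0` and `C ≥ 0`,
`min((1/2)·log₂(1+P), C) − min([(1/2)·log₂(1/2+P)]⁺, C) ≤ 1/2`. -/
theorem pnc_within_half_bit_of_cutset (P C : ℝ) (hP : 0 ≤ P) (hC : 0 ≤ C) :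
    min ((1 / 2 : ℝ) * Real.logb 2 (1 + P)) C
      - min (max 0 ((1 / 2 : ℝ) * Real.logb 2 (1 / 2 + P))) C ≤ 1 / 2 :=
  pnc_within_half_bit_of_cutset_general P C hP
end
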